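/- arXiv:2108.03531 — 3 statements merged into one kernel-verified Lean document; each statement's English description precedes it below -/
import Mathlib

section
/- (Klein's inequality for the von Neumann divergence.) For any n×n real symmetric positive definite matrices X and Y, D_vN(X‖Y) = Tr(X log X − X log Y − X + Y) ≥ 0, with equality if and only if X = Y. -/
open Matrix

/-- Matrix logarithm of a real symmetric matrix, via the spectral decomposition:
apply the real logarithm to the eigenvalues. (Junk value `0` if not symmetric.) -/
noncomputable def matLog {n : Type*} [Fintype n] [DecidableEq n]
    (A : Matrix n n ℝ) : Matrix n n ℝ :=
  if h : A.IsHermitian then h.cfc Real.log else 0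

/-- The von Neumann divergence `D_vN(X‖Y) = Tr(X log X − X log Y − X + Y)`. -/
noncomputable def DvN {n : Type*} [Fintype n] [DecidableEq n]
    (X Y : Matrix n n ℝ) : ℝ :=
  (X * matLog X - X * matLog Y - X + Y).trace

/-- The symmetric (Jeffery) von Neumann divergence
`J_vN(X:Y) = (1/2)(D_vN(X‖Y) + D_vN(Y‖X))`. -/
noncomputable def JvN {n : Type*} [Fintype n] [DecidableEq n]
    (X Y : Matrix n n ℝ) : ℝ :=
  (1 / 2) * (DvN X Y + DvN Y X)

/-!
Diagonalize `X = ∑ μᵢ uᵢ uᵢᵀ` and `Y = ∑ νⱼ vⱼ vⱼᵀ`. Then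
`Tr (f X * g Y) = ∑ᵢⱼ ⟪uᵢ, vⱼ⟫² f(μᵢ) g(νⱼ)` for all `f`, `g`, so
`D_vN(X‖Y) = ∑ᵢⱼ ⟪uᵢ, vⱼ⟫² νⱼ klFun(μᵢ / νⱼ)` with `klFun t = t log t + 1 - t ≥ 0`,
vanishing only at `t = 1`. If the divergence vanishes, `μᵢ = νⱼ` whenever `⟪uᵢ, vⱼ⟫ ≠ 0`, i.e. the
change of basis intertwines the two diagonal matrices, and hence `X = Y`.
-/

namespace Matrix.IsHermitian

variable {n : Type*} [Fintype n] [DecidableEq n]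

section RCLike

variable {𝕜 : Type*} [RCLike 𝕜] {A B : Matrix n n 𝕜}

/-- The `(i, j)` entry is `⟪uᵢ, vⱼ⟫` for the eigenbases `(uᵢ)` of `A` and `(vⱼ)` of `B`. -/
noncomputable def eigenbasisOverlap (hA : A.IsHermitian) (hB : B.IsHermitian) : Matrix n n 𝕜 :=
  star (hA.eigenvectorUnitary : Matrix n n 𝕜) * hB.eigenvectorUnitary

theorem eq_of_eigenbasisOverlap_ne_zero (hA : A.IsHermitian) (hB : B.IsHermitian)
    (h : ∀ i j, hA.eigenbasisOverlap hB i j ≠ 0 → hA.eigenvalues i = hB.eigenvalues j) :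
    A = B := by
  set U : Matrix n n 𝕜 := ↑hA.eigenvectorUnitary
  set V : Matrix n n 𝕜 := ↑hB.eigenvectorUnitary
  set W := hA.eigenbasisOverlap hB
  have hcomm : diagonal (RCLike.ofReal ∘ hA.eigenvalues) * W =
      W * diagonal (RCLike.ofReal ∘ hB.eigenvalues) := by
    ext i j
    rw [diagonal_mul, mul_diagonal]
    by_cases hij : W i j = 0
    · simp [hij]
    · simp [h i j hij, mul_comm]
  have hVV : V * star V = 1 := Unitary.coe_mul_star_self _
  have hUU : U * star U = 1 := Unitary.coe_mul_star_self _
  have hW : W = star U * V := rfl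
  calc A = U * diagonal (RCLike.ofReal ∘ hA.eigenvalues) * star U := hA.spectral_theorem
    _ = U * (diagonal (RCLike.ofReal ∘ hA.eigenvalues) * W) * star V := by
      rw [hW]; simp only [mul_assoc, hVV, mul_one]
    _ = U * star U * (V * diagonal (RCLike.ofReal ∘ hB.eigenvalues) * star V) := by
      rw [hcomm, hW]; simp only [mul_assoc]
    _ = B := by rw [hUU, one_mul]; exact hB.spectral_theorem.symm

end RCLike

section Real

variable {A B : Matrix n n ℝ}

theorem trace_cfc_mul_cfc (hA : A.IsHermitian) (hB : B.IsHermitian) (f g : ℝ → ℝ) :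
    (cfc f A * cfc g B).trace = ∑ i, ∑ j,
      hA.eigenbasisOverlap hB i j ^ 2 * f (hA.eigenvalues i) * g (hB.eigenvalues j) := by
  set U : Matrix n n ℝ := ↑hA.eigenvectorUnitary
  set V : Matrix n n ℝ := ↑hB.eigenvectorUnitary
  set W := hA.eigenbasisOverlap hB
  have hW : W = star U * V := rfl
  have hcyc :
      U * diagonal (f ∘ hA.eigenvalues) * star U * (V * diagonal (g ∘ hB.eigenvalues) * star V) =
        U * (diagonal (f ∘ hA.eigenvalues) * W * diagonal (g ∘ hB.eigenvalues) * star V) := by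
    simp only [hW, mul_assoc]
  have hVU : star V * U = star W := by rw [hW, star_mul, star_star]
  rw [hA.cfc_eq, hB.cfc_eq, IsHermitian.cfc, IsHermitian.cfc]
  simp only [RCLike.ofReal_real_eq_id, Function.id_comp, Unitary.conjStarAlgAut_apply]
  rw [hcyc, trace_mul_comm, mul_assoc _ (star V), hVU]
  refine Finset.sum_congr rfl fun i _ => ?_
  rw [diag_apply, mul_apply]
  refine Finset.sum_congr rfl fun j _ => ?_
  simp only [mul_diagonal, diagonal_mul, star_apply, star_trivial, Function.comp_apply]
  ring

end Real

end Matrix.IsHermitian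

open InformationTheory

lemma mul_log_sub_mul_log_sub_add_eq_mul_klFun {a b : ℝ} (ha : 0 < a) (hb : 0 < b) :
    a * Real.log a - a * Real.log b - a + b = b * klFun (a / b) := by
  rw [klFun_apply, Real.log_div ha.ne' hb.ne']
  field_simp
  ring

section Divergence

variable {n : Type*} [Fintype n] [DecidableEq n] {X Y : Matrix n n ℝ}

lemma matLog_eq_cfc (hX : X.IsHermitian) : matLog X = cfc Real.log X := by
  rw [matLog, dif_pos hX, hX.cfc_eq]

lemma DvN_eq_sum_eigenbasisOverlap (hX : X.IsHermitian) (hY : Y.IsHermitian) :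
    DvN X Y = ∑ i, ∑ j, hX.eigenbasisOverlap hY i j ^ 2 *
      (hX.eigenvalues i * Real.log (hX.eigenvalues i) -
        hX.eigenvalues i * Real.log (hY.eigenvalues j) - hX.eigenvalues i + hY.eigenvalues j) := by
  have hX' : IsSelfAdjoint X := hX
  have hY' : IsSelfAdjoint Y := hY
  have h : DvN X Y =
      (cfc (fun x => x * Real.log x) X * cfc (fun _ : ℝ => (1 : ℝ)) Y).trace -
        (cfc (fun x : ℝ => x) X * cfc Real.log Y).trace -
        (cfc (fun x : ℝ => x) X * cfc (fun _ : ℝ => (1 : ℝ)) Y).trace +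
        (cfc (fun _ : ℝ => (1 : ℝ)) X * cfc (fun x : ℝ => x) Y).trace := by
    rw [cfc_mul (fun x => x) Real.log X (hg := (finite_spectrum X).continuousOn _),
      cfc_id' ℝ X, cfc_id' ℝ Y, cfc_const_one ℝ X, cfc_const_one ℝ Y, ← matLog_eq_cfc hX,
      ← matLog_eq_cfc hY, mul_one, mul_one, one_mul, DvN, trace_add, trace_sub, trace_sub]
  simp only [h, hX.trace_cfc_mul_cfc hY, ← Finset.sum_sub_distrib, ← Finset.sum_add_distrib]
  refine Finset.sum_congr rfl fun i _ => Finset.sum_congr rfl fun j _ => ?_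
  ring

lemma DvN_eq_sum_eigenbasisOverlap_mul_klFun (hX : X.PosDef) (hY : Y.PosDef) :
    DvN X Y = ∑ i, ∑ j, hX.1.eigenbasisOverlap hY.1 i j ^ 2 *
      (hY.1.eigenvalues j * klFun (hX.1.eigenvalues i / hY.1.eigenvalues j)) := by
  rw [DvN_eq_sum_eigenbasisOverlap hX.1 hY.1]
  simp only [mul_log_sub_mul_log_sub_add_eq_mul_klFun (hX.eigenvalues_pos _) (hY.eigenvalues_pos _)]

end Divergence

/-- Klein's inequality for the von Neumann divergence: `D_vN(X‖Y) ≥ 0`,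
with equality iff `X = Y`. -/
theorem DvN_nonneg_and_eq_zero_iff {n : Type*} [Fintype n] [DecidableEq n]
    (X Y : Matrix n n ℝ) (hX : X.PosDef) (hY : Y.PosDef) :
    0 ≤ DvN X Y ∧ (DvN X Y = 0 ↔ X = Y) := by
  set W := hX.1.eigenbasisOverlap hY.1
  set μ := hX.1.eigenvalues
  set ν := hY.1.eigenvalues
  have hsum : DvN X Y = ∑ p : n × n, W p.1 p.2 ^ 2 * (ν p.2 * klFun (μ p.1 / ν p.2)) := by
    rw [DvN_eq_sum_eigenbasisOverlap_mul_klFun hX hY, ← Fintype.sum_prod_type']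
  have hterm : ∀ p : n × n, 0 ≤ W p.1 p.2 ^ 2 * (ν p.2 * klFun (μ p.1 / ν p.2)) := fun p =>
    mul_nonneg (sq_nonneg _) (mul_nonneg (hY.eigenvalues_pos _).le
      (klFun_nonneg (div_pos (hX.eigenvalues_pos _) (hY.eigenvalues_pos _)).le))
  refine ⟨hsum ▸ Finset.sum_nonneg fun p _ => hterm p, fun h0 => ?_, by rintro rfl; simp [DvN]⟩
  refine hX.1.eq_of_eigenbasisOverlap_ne_zero hY.1 fun i j hij => ?_
  have h := congrFun ((Fintype.sum_eq_zero_iff_of_nonneg hterm).mp (hsum ▸ h0)) (i, j)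
  have hν := hY.eigenvalues_pos j
  rw [Pi.zero_apply, mul_eq_zero, mul_eq_zero,
    klFun_eq_zero_iff (div_pos (hX.eigenvalues_pos i) hν).le, div_eq_one_iff_eq hν.ne'] at h
  exact (h.resolve_left (pow_ne_zero 2 hij)).resolve_left hν.ne'
end

section
/- (Scalar eigenvalue lemma underlying Proposition 1.) Let ε ≥ 0 and let a, b be real numbers with 0 < a ≤ b + ε and b ≥ 1. Then a·log a − b·log b ≤ ε·log(b + ε) + b·log(1 + ε). -/
/-- Scalar eigenvalue lemma underlying Proposition 1: for `ε ≥ 0`, `0 < a ≤ b + ε`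
and `b ≥ 1`, one has `a·log a − b·log b ≤ ε·log(b + ε) + b·log(1 + ε)`. -/
theorem eigenvalue_log_bound (ε a b : ℝ) (hε : 0 ≤ ε) (ha : 0 < a)
    (hab : a ≤ b + ε) (hb : 1 ≤ b) :
    a * Real.log a - b * Real.log b ≤
      ε * Real.log (b + ε) + b * Real.log (1 + ε) := by
  have hbε : (1 : ℝ) ≤ b + ε := by linarith
  have h1 : a * Real.log a ≤ (b + ε) * Real.log (b + ε) := by
    rcases le_or_gt a 1 with h | h
    · have h2 : Real.log a ≤ 0 := Real.log_nonpos ha.le h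
      have h3 : 0 ≤ Real.log (b + ε) := Real.log_nonneg hbε
      nlinarith
    · have h2 : Real.log a ≤ Real.log (b + ε) := Real.log_le_log ha hab
      have h3 : 0 ≤ Real.log a := Real.log_nonneg h.le
      nlinarith
  have h4 : Real.log (b + ε) ≤ Real.log b + Real.log (1 + ε) := by
    rw [← Real.log_mul (by linarith) (by linarith)]
    exact Real.log_le_log (by linarith) (by nlinarith)
  nlinarith [Real.log_nonneg hbε]
end

section
/- (Interpretation of the J_vN loss as matching second-order statistics.) Let P be a probability measure on ℝ^d with finite second moments and let f, f̂ : ℝ^d → ℝ be measurable with finite second moments under P. If the joint covariance matrices σ^P_{x,f(x)} and σ^P_{x,f̂(x)} are positive definite, then J_vN(σ^P_{x,f(x)} : σ^P_{x,f̂(x)}) = 0 if and only if Var(f(x)) = Var(f̂(x)) and Cov(x_i, f(x)) = Cov(x_i, f̂(x)) for every coordinate i ∈ {1,…,d}. -/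
open Matrix MeasureTheory

/-- The covariance matrix of a measure on `ℝ^m`: the matrix of pairwise covariances
of the coordinates. -/
noncomputable def covMatrix {m : ℕ} (Q : Measure (Fin m → ℝ)) :
    Matrix (Fin m) (Fin m) ℝ :=
  Matrix.of fun i j => ∫ x, (x i - ∫ y, y i ∂Q) * (x j - ∫ y, y j ∂Q) ∂Q

/-- `σ^P_{x,g(x)}` : the `(d+1) × (d+1)` covariance matrix of the random vector
`(x, g(x))` with `x ~ P`. -/
noncomputable def jointCov {d : ℕ} (P : Measure (Fin d → ℝ))
    (g : (Fin d → ℝ) → ℝ) : Matrix (Fin (d + 1)) (Fin (d + 1)) ℝ :=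
  covMatrix (P.map (fun x => Fin.snoc x (g x)))

/-- `d_P(g, g₂) = √(J_vN(σ^P_{x,g(x)} : σ^P_{x,g₂(x)}))`. -/
noncomputable def dvn {d : ℕ} (P : Measure (Fin d → ℝ))
    (g g₂ : (Fin d → ℝ) → ℝ) : ℝ :=
  Real.sqrt (JvN (jointCov P g) (jointCov P g₂))

/-!
Diagonalise `X = U diag(λ) Uᵀ` and `Y = V diag(μ) Vᵀ` and put `W = Uᵀ V`. Then
`Uᵀ (X - Y) V` has entries `(λᵢ - μⱼ) Wᵢⱼ`, and the same computation for the logarithms gives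
`2 J_vN(X : Y) = ∑ᵢⱼ Wᵢⱼ² (λᵢ - μⱼ)(log λᵢ - log μⱼ)`. Every summand is nonnegative because
`log` is increasing, so `J_vN(X : Y) = 0` forces `Wᵢⱼ (λᵢ - μⱼ) = 0` for all `i, j`, that is
`X = Y`. For the joint covariance matrices, which share the block of `x`, `X = Y` says exactly
that the entries in the row and column of `f(x)` agree.
-/

lemma StrictMonoOn.sub_mul_sub_pos {α : Type*} [Ring α] [LinearOrder α] [IsStrictOrderedRing α]
    {f : α → α} {s : Set α} (hf : StrictMonoOn f s) {a b : α} (ha : a ∈ s) (hb : b ∈ s)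
    (hab : a ≠ b) : 0 < (a - b) * (f a - f b) := by
  rcases hab.lt_or_gt with h | h
  · exact mul_pos_of_neg_of_neg (sub_neg.2 h) (sub_neg.2 (hf ha hb h))
  · exact mul_pos (sub_pos.2 h) (sub_pos.2 (hf hb ha h))

lemma StrictMonoOn.sub_mul_sub_nonneg {α : Type*} [Ring α] [LinearOrder α]
    [IsStrictOrderedRing α] {f : α → α} {s : Set α} (hf : StrictMonoOn f s) {a b : α}
    (ha : a ∈ s) (hb : b ∈ s) : 0 ≤ (a - b) * (f a - f b) := by
  rcases eq_or_ne a b with rfl | hab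
  · simp
  · exact (hf.sub_mul_sub_pos ha hb hab).le

section Spectral

variable {n : Type*} [Fintype n] [DecidableEq n]

lemma Matrix.IsHermitian.eq_conj_diagonal_eigenvalues {X : Matrix n n ℝ} (hX : X.IsHermitian) :
    X = (hX.eigenvectorUnitary : Matrix n n ℝ) * diagonal hX.eigenvalues *
      star (hX.eigenvectorUnitary : Matrix n n ℝ) := by
  conv_lhs => rw [hX.spectral_theorem]
  simp [RCLike.ofReal_real_eq_id]

lemma Matrix.IsHermitian.matLog_eq {X : Matrix n n ℝ} (hX : X.IsHermitian) :
    matLog X = (hX.eigenvectorUnitary : Matrix n n ℝ) * diagonal (Real.log ∘ hX.eigenvalues) *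
      star (hX.eigenvectorUnitary : Matrix n n ℝ) := by
  rw [matLog, dif_pos hX, Matrix.IsHermitian.cfc]
  simp [RCLike.ofReal_real_eq_id, Function.comp_def]

lemma conj_diagonal_sub_conj_diagonal {R : Type*} [CommRing R] [StarRing R]
    {U V : Matrix n n R} (hU : U * star U = 1) (hV : V * star V = 1) (a b : n → R) :
    U * diagonal a * star U - V * diagonal b * star V =
      U * of (fun i j => (a i - b j) * (star U * V) i j) * star V := by
  have hmid : of (fun i j => (a i - b j) * (star U * V) i j) =
      diagonal a * (star U * V) - (star U * V) * diagonal b := by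
    ext i j
    simp only [of_apply, Matrix.sub_apply, diagonal_mul, mul_diagonal]
    ring
  rw [hmid, mul_sub, sub_mul]
  congr 1
  · simp only [← mul_assoc]
    rw [mul_assoc _ V, hV, mul_one]
  · simp only [← mul_assoc]
    rw [hU, one_mul]

lemma trace_sub_conj_diagonal_mul_sub_conj_diagonal {R : Type*} [CommRing R] [StarRing R]
    [TrivialStar R] {U V : Matrix n n R} (hU : U ∈ unitaryGroup n R) (hV : V ∈ unitaryGroup n R)
    (a b c e : n → R) :
    ((U * diagonal a * star U - V * diagonal b * star V) *
        (U * diagonal c * star U - V * diagonal e * star V)).trace =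
      ∑ i, ∑ j, (star U * V) i j ^ 2 * ((a i - b j) * (c i - e j)) := by
  have hUU := mem_unitaryGroup_iff.mp hU
  have hVV := mem_unitaryGroup_iff.mp hV
  -- writing the second factor as `-(V * ⋯ * star U)` makes the inner `star V * V` cancel
  rw [conj_diagonal_sub_conj_diagonal hUU hVV, ← neg_sub (V * diagonal e * star V),
    conj_diagonal_sub_conj_diagonal hVV hUU, mul_neg, trace_neg]
  set A := of fun i j => (a i - b j) * (star U * V) i j
  set B := of fun i j => (e i - c j) * (star V * U) i j
  have hcancel : U * A * star V * (V * B * star U) = U * (A * B) * star U := by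
    simp only [← mul_assoc]
    rw [mul_assoc (U * A), mem_unitaryGroup_iff'.mp hV, mul_one]
  rw [hcancel, trace_mul_cycle, ← mul_assoc, mem_unitaryGroup_iff'.mp hU, one_mul]
  have hWt : ∀ i j, (star V * U) j i = (star U * V) i j := fun i j => by
    simp only [mul_apply, star_apply, star_trivial, mul_comm]
  simp only [trace, diag_apply, mul_apply (M := A), A, B, of_apply, hWt,
    ← Finset.sum_neg_distrib]
  refine Finset.sum_congr rfl fun i _ => Finset.sum_congr rfl fun j _ => ?_
  ring

lemma JvN_eq_half_trace (X Y : Matrix n n ℝ) :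
    JvN X Y = 1 / 2 * ((X - Y) * (matLog X - matLog Y)).trace := by
  simp only [JvN, DvN, sub_mul, mul_sub, trace_sub, trace_add]
  ring

lemma JvN_eq_sum_of_isHermitian {X Y : Matrix n n ℝ} (hX : X.IsHermitian) (hY : Y.IsHermitian) :
    JvN X Y = 1 / 2 * ∑ i, ∑ j,
      (star (hX.eigenvectorUnitary : Matrix n n ℝ) * hY.eigenvectorUnitary) i j ^ 2 *
        ((hX.eigenvalues i - hY.eigenvalues j) *
          (Real.log (hX.eigenvalues i) - Real.log (hY.eigenvalues j))) := by
  rw [JvN_eq_half_trace, hX.matLog_eq, hY.matLog_eq]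
  nth_rw 1 [hX.eq_conj_diagonal_eigenvalues]
  nth_rw 1 [hY.eq_conj_diagonal_eigenvalues]
  rw [trace_sub_conj_diagonal_mul_sub_conj_diagonal hX.eigenvectorUnitary.2
    hY.eigenvectorUnitary.2]
  rfl

lemma JvN_eq_zero_iff_of_posDef {X Y : Matrix n n ℝ} (hX : X.PosDef) (hY : Y.PosDef) :
    JvN X Y = 0 ↔ X = Y := by
  refine ⟨fun h => ?_, fun h => by simp [h, JvN, DvN]⟩
  set U : Matrix n n ℝ := ↑hX.1.eigenvectorUnitary
  set V : Matrix n n ℝ := ↑hY.1.eigenvectorUnitary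
  set lam := hX.1.eigenvalues
  set mu := hY.1.eigenvalues
  suffices hzero : of (fun i j => (lam i - mu j) * (star U * V) i j) = 0 by
    rw [← sub_eq_zero]
    nth_rw 1 [hX.1.eq_conj_diagonal_eigenvalues]
    nth_rw 1 [hY.1.eq_conj_diagonal_eigenvalues]
    rw [conj_diagonal_sub_conj_diagonal (mem_unitaryGroup_iff.mp hX.1.eigenvectorUnitary.2)
      (mem_unitaryGroup_iff.mp hY.1.eigenvectorUnitary.2), hzero, mul_zero, zero_mul]
  have hlog : StrictMonoOn Real.log (Set.Ioi 0) := Real.strictMonoOn_log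
  have hterm_nonneg (i j : n) :
      0 ≤ (star U * V) i j ^ 2 * ((lam i - mu j) * (Real.log (lam i) - Real.log (mu j))) :=
    mul_nonneg (sq_nonneg _)
      (hlog.sub_mul_sub_nonneg (hX.eigenvalues_pos i) (hY.eigenvalues_pos j))
  have hsum : ∑ i, ∑ j,
      (star U * V) i j ^ 2 * ((lam i - mu j) * (Real.log (lam i) - Real.log (mu j))) = 0 := by
    rw [JvN_eq_sum_of_isHermitian hX.1 hY.1] at h
    linarith
  have hrows := (Fintype.sum_eq_zero_iff_of_nonneg fun i =>
    Fintype.sum_nonneg (hterm_nonneg i)).mp hsum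
  ext i j
  have hij := congrFun ((Fintype.sum_eq_zero_iff_of_nonneg (hterm_nonneg i)).mp
    (congrFun hrows i)) j
  rcases mul_eq_zero.mp hij with hW | hφ
  · simp [pow_eq_zero_iff two_ne_zero |>.mp hW]
  · have heq : lam i = mu j := by
      by_contra hne
      exact (hlog.sub_mul_sub_pos (hX.eigenvalues_pos i) (hY.eigenvalues_pos j) hne).ne' hφ
    simp [heq]

end Spectral

lemma covMatrix_isSymm {m : ℕ} (Q : Measure (Fin m → ℝ)) : (covMatrix Q).IsSymm := by
  ext i j
  simp only [covMatrix, transpose_apply, of_apply, mul_comm]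

lemma Measurable.finSnoc {α β : Type*} [MeasurableSpace α] [MeasurableSpace β] {d : ℕ}
    {f : α → Fin d → β} {g : α → β} (hf : Measurable f) (hg : Measurable g) :
    Measurable (fun x => (Fin.snoc (f x) (g x) : Fin (d + 1) → β)) := by
  rw [measurable_pi_iff]
  refine Fin.lastCases ?_ fun k => ?_
  · simpa only [Fin.snoc_last] using hg
  · simpa only [Fin.snoc_castSucc] using hf.eval (a := k)

lemma jointCov_isSymm {d : ℕ} (P : Measure (Fin d → ℝ)) (g : (Fin d → ℝ) → ℝ) :
    (jointCov P g).IsSymm :=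
  covMatrix_isSymm _

section JointCov

variable {d : ℕ} (P : Measure (Fin d → ℝ)) {g : (Fin d → ℝ) → ℝ}

lemma jointCov_apply (hg : Measurable g) (i j : Fin (d + 1)) :
    jointCov P g i j = ∫ x, ((Fin.snoc x (g x) : Fin (d + 1) → ℝ) i
        - ∫ y, (Fin.snoc y (g y) : Fin (d + 1) → ℝ) i ∂P) *
      ((Fin.snoc x (g x) : Fin (d + 1) → ℝ) j
        - ∫ y, (Fin.snoc y (g y) : Fin (d + 1) → ℝ) j ∂P) ∂P := by
  have hT := measurable_id.finSnoc hg
  have hmean : ∀ k : Fin (d + 1),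
      ∫ y, y k ∂(P.map (fun x => (Fin.snoc x (g x) : Fin (d + 1) → ℝ)))
        = ∫ y, (Fin.snoc y (g y) : Fin (d + 1) → ℝ) k ∂P :=
    fun k => integral_map hT.aemeasurable (measurable_pi_apply k).aestronglyMeasurable
  rw [jointCov, covMatrix, of_apply, hmean i, hmean j]
  exact integral_map hT.aemeasurable
    (((measurable_pi_apply i).sub measurable_const).mul
      ((measurable_pi_apply j).sub measurable_const)).aestronglyMeasurable

lemma jointCov_castSucc_castSucc (hg : Measurable g) (i j : Fin d) :
    jointCov P g i.castSucc j.castSucc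
      = ∫ x, (x i - ∫ y, y i ∂P) * (x j - ∫ y, y j ∂P) ∂P := by
  simp only [jointCov_apply P hg, Fin.snoc_castSucc]

lemma jointCov_castSucc_last (hg : Measurable g) (i : Fin d) :
    jointCov P g i.castSucc (Fin.last d)
      = ∫ x, (x i - ∫ y, y i ∂P) * (g x - ∫ y, g y ∂P) ∂P := by
  simp only [jointCov_apply P hg, Fin.snoc_castSucc, Fin.snoc_last]

lemma jointCov_last_last (hg : Measurable g) :
    jointCov P g (Fin.last d) (Fin.last d) = ∫ x, (g x - ∫ y, g y ∂P) ^ 2 ∂P := by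
  simp only [jointCov_apply P hg, Fin.snoc_last, sq]

lemma jointCov_eq_jointCov_iff {f fhat : (Fin d → ℝ) → ℝ} (hf : Measurable f)
    (hfhat : Measurable fhat) :
    jointCov P f = jointCov P fhat ↔
      (∫ x, (f x - ∫ y, f y ∂P) ^ 2 ∂P = ∫ x, (fhat x - ∫ y, fhat y ∂P) ^ 2 ∂P) ∧
      ∀ i, ∫ x, (x i - ∫ y, y i ∂P) * (f x - ∫ y, f y ∂P) ∂P =
        ∫ x, (x i - ∫ y, y i ∂P) * (fhat x - ∫ y, fhat y ∂P) ∂P := by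
  simp only [← jointCov_last_last P hf, ← jointCov_last_last P hfhat,
    ← jointCov_castSucc_last P hf, ← jointCov_castSucc_last P hfhat]
  refine ⟨fun h => ⟨by rw [h], fun i => by rw [h]⟩, fun ⟨hvar, hcov⟩ => ?_⟩
  ext i j
  induction i using Fin.lastCases <;> induction j using Fin.lastCases
  · exact hvar
  · rw [(jointCov_isSymm P f).apply, (jointCov_isSymm P fhat).apply]
    exact hcov _
  · exact hcov _
  · rw [jointCov_castSucc_castSucc P hf, jointCov_castSucc_castSucc P hfhat]

end JointCov

theorem JvN_jointCov_eq_zero_iff_general {d : ℕ}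
    (P : Measure (Fin d → ℝ))
    (f fhat : (Fin d → ℝ) → ℝ) (hf : Measurable f) (hfhat : Measurable fhat)
    (hpd : (jointCov P f).PosDef) (hpd' : (jointCov P fhat).PosDef) :
    JvN (jointCov P f) (jointCov P fhat) = 0 ↔
      (∫ x, (f x - ∫ y, f y ∂P) ^ 2 ∂P = ∫ x, (fhat x - ∫ y, fhat y ∂P) ^ 2 ∂P) ∧
      ∀ i, ∫ x, (x i - ∫ y, y i ∂P) * (f x - ∫ y, f y ∂P) ∂P =
        ∫ x, (x i - ∫ y, y i ∂P) * (fhat x - ∫ y, fhat y ∂P) ∂P := by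
  rw [JvN_eq_zero_iff_of_posDef hpd hpd', jointCov_eq_jointCov_iff P hf hfhat]

/-- Interpretation of the `J_vN` loss as matching second-order statistics:
`J_vN(σ^P_{x,f(x)} : σ^P_{x,f̂(x)}) = 0` iff `Var(f(x)) = Var(f̂(x))` and
`Cov(xᵢ, f(x)) = Cov(xᵢ, f̂(x))` for every coordinate `i`. -/
theorem JvN_jointCov_eq_zero_iff {d : ℕ}
    (P : Measure (Fin d → ℝ)) [IsProbabilityMeasure P]
    (hm : ∀ i, MemLp (fun x => x i) 2 P)
    (f fhat : (Fin d → ℝ) → ℝ) (hf : Measurable f) (hfhat : Measurable fhat)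
    (hf2 : MemLp f 2 P) (hfhat2 : MemLp fhat 2 P)
    (hpd : (jointCov P f).PosDef) (hpd' : (jointCov P fhat).PosDef) :
    JvN (jointCov P f) (jointCov P fhat) = 0 ↔
      (∫ x, (f x - ∫ y, f y ∂P) ^ 2 ∂P = ∫ x, (fhat x - ∫ y, fhat y ∂P) ^ 2 ∂P) ∧
      ∀ i, ∫ x, (x i - ∫ y, y i ∂P) * (f x - ∫ y, f y ∂P) ∂P =
        ∫ x, (x i - ∫ y, y i ∂P) * (fhat x - ∫ y, fhat y ∂P) ∂P :=
  JvN_jointCov_eq_zero_iff_general P f fhat hf hfhat hpd hpd'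
end
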